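/- Let $A \in M_N(\{0,1\})$ be primitive with all entries of $A^k$ strictly positive for some $k$, and suppose not all admissible words of length $k$ are cycles. Let $C_k$ be the set of admissible cycles of length $k$, i.e. admissible words $\alpha$ of length $k$ which close up to a cycle. Then the element $x_k = \sum_{\alpha \in C_k} S_\alpha S_\alpha^*$ of the Cuntz–Krieger algebra $O_A$ is a nonzero projection different from $1$ which is invariant under every gauge automorphism $\alpha_z$ ($z \in \mathbb{T}^N$, $\alpha_z(S_i) = z_i S_i$) and under every automorphism induced by a graph automorphism of $A$. -/

import Mathlib

open scoped Classical

/-- Admissibility of a word `α : Fin k → Fin N` for the `{0,1}`-matrix `A`. -/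
def Adm {N : ℕ} (A : Matrix (Fin N) (Fin N) ℕ) {k : ℕ} (α : Fin k → Fin N) : Prop :=
  ∀ (i : ℕ) (h : i + 1 < k), A (α ⟨i, by omega⟩) (α ⟨i + 1, h⟩) = 1

/-- An admissible word of length `k` which closes up to a cycle. -/
def Cyc {N : ℕ} (A : Matrix (Fin N) (Fin N) ℕ) {k : ℕ} (α : Fin k → Fin N) : Prop :=
  Adm A α ∧ ∀ h : 0 < k, A (α ⟨k - 1, by omega⟩) (α ⟨0, h⟩) = 1

section Aux

variable {B : Type*} [Ring B] [StarRing B]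
variable {N : ℕ} {A : Matrix (Fin N) (Fin N) ℕ} {S : Fin N → B}

/-- word operator -/
def CKW (S : Fin N → B) (l : List (Fin N)) : B := (l.map S).prod

lemma CKW_nil : CKW S ([] : List (Fin N)) = 1 := rfl

lemma CKW_cons (a : Fin N) (l : List (Fin N)) : CKW S (a :: l) = S a * CKW S l := by
  simp [CKW]

lemma CK_iso (hck1 : ∑ j, S j * star (S j) = 1)
    (hck2 : ∀ i l, star (S i) * S l =
      if i = l then ∑ j, A i j • (S j * star (S j)) else 0)
    (j : Fin N) : S j * star (S j) * S j = S j := by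
  have h : (∑ i, S i * star (S i)) * S j = S j * star (S j) * S j := by
    rw [Finset.sum_mul, Finset.sum_eq_single j]
    · intro b _ hb
      rw [mul_assoc, hck2, if_neg hb, mul_zero]
    · simp
  rwa [hck1, one_mul, eq_comm] at h

lemma CK_Q (hck1 : ∑ j, S j * star (S j) = 1)
    (hck2 : ∀ i l, star (S i) * S l =
      if i = l then ∑ j, A i j • (S j * star (S j)) else 0)
    (i j : Fin N) : star (S i) * S i * S j = A i j • S j := by
  rw [hck2 i i, if_pos rfl, Finset.sum_mul, Finset.sum_eq_single j]
  · rw [smul_mul_assoc, CK_iso hck1 hck2]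
  · intro b _ hb
    rw [smul_mul_assoc, mul_assoc, hck2, if_neg hb, mul_zero, smul_zero]
  · simp

lemma CK_orth (hck1 : ∑ j, S j * star (S j) = 1)
    (hck2 : ∀ i l, star (S i) * S l =
      if i = l then ∑ j, A i j • (S j * star (S j)) else 0) :
    ∀ (l m : List (Fin N)), l.length = m.length → l ≠ m →
      star (CKW S l) * CKW S m = 0 := by
  intro l
  induction l with
  | nil =>
    intro m hlen hne
    cases m with
    | nil => exact absurd rfl hne
    | cons b m' => simp at hlen
  | cons a l ih =>
    intro m hlen hne
    cases m with
    | nil => simp at hlen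
    | cons b m' =>
      rw [CKW_cons, CKW_cons, star_mul]
      by_cases hab : a = b
      · subst hab
        cases m' with
        | nil =>
          have : l = [] := by simpa using hlen
          subst this
          exact absurd rfl hne
        | cons c m'' =>
          have h1 : star (S a) * (S a * CKW S (c :: m'')) = A a c • CKW S (c :: m'') := by
            rw [CKW_cons, ← mul_assoc, ← mul_assoc, CK_Q hck1 hck2, smul_mul_assoc, ← CKW_cons]
          have hlen' : l.length = (c :: m'').length := by simpa using hlen
          have hne' : l ≠ c :: m'' := fun h => hne (by rw [h])
          calc star (CKW S l) * star (S a) * (S a * CKW S (c :: m''))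
              = star (CKW S l) * (star (S a) * (S a * CKW S (c :: m''))) := by
                simp only [mul_assoc]
            _ = star (CKW S l) * (A a c • CKW S (c :: m'')) := by rw [h1]
            _ = A a c • (star (CKW S l) * CKW S (c :: m'')) := by rw [mul_smul_comm]
            _ = 0 := by rw [ih _ hlen' hne', smul_zero]
      · have h0 : star (S a) * S b = 0 := by rw [hck2, if_neg hab]
        calc star (CKW S l) * star (S a) * (S b * CKW S m')
            = star (CKW S l) * (star (S a) * S b * CKW S m') := by simp only [mul_assoc]
          _ = 0 := by rw [h0, zero_mul, mul_zero]

lemma CK_proj (hck1 : ∑ j, S j * star (S j) = 1)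
    (hck2 : ∀ i l, star (S i) * S l =
      if i = l then ∑ j, A i j • (S j * star (S j)) else 0) :
    ∀ (l : List (Fin N)), l.Chain' (fun a b => A a b = 1) →
      CKW S l * star (CKW S l) * CKW S l = CKW S l := by
  intro l
  induction l with
  | nil => simp [CKW_nil]
  | cons a l ih =>
    intro hadm
    cases l with
    | nil =>
      simpa [CKW_cons, CKW_nil] using CK_iso hck1 hck2 a
    | cons c l' =>
      have hac : A a c = 1 := (List.isChain_cons_cons.mp hadm).1
      have ih' := ih (List.isChain_cons_cons.mp hadm).2
      have h1 : star (S a) * (S a * CKW S (c :: l')) = CKW S (c :: l') := by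
        rw [CKW_cons, ← mul_assoc, ← mul_assoc, CK_Q hck1 hck2, hac, one_smul, ← CKW_cons]
      rw [CKW_cons, star_mul]
      calc S a * CKW S (c :: l') * (star (CKW S (c :: l')) * star (S a)) *
            (S a * CKW S (c :: l'))
          = S a * (CKW S (c :: l') * (star (CKW S (c :: l')) *
              (star (S a) * (S a * CKW S (c :: l'))))) := by simp only [mul_assoc]
        _ = S a * (CKW S (c :: l') * (star (CKW S (c :: l')) * CKW S (c :: l'))) := by rw [h1]
        _ = S a * (CKW S (c :: l') * star (CKW S (c :: l')) * CKW S (c :: l')) := by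
            simp only [mul_assoc]
        _ = S a * CKW S (c :: l') := by rw [ih']

end Aux
set_option linter.unusedSectionVars false

lemma ofFn_smul_prod {B : Type*} [Ring B] [Algebra ℂ B] :
    ∀ {m : ℕ} (c : Fin m → ℂ) (b : Fin m → B),
      (List.ofFn fun i => c i • b i).prod = (∏ i, c i) • (List.ofFn b).prod := by
  intro m
  induction m with
  | zero => intro c b; simp
  | succ n ih =>
    intro c b
    rw [List.ofFn_succ, List.ofFn_succ, List.prod_cons, List.prod_cons, ih,
      Fin.prod_univ_succ, smul_mul_smul_comm]

lemma exists_path {N : ℕ} (A : Matrix (Fin N) (Fin N) ℕ)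
    (hA01 : ∀ i j, A i j = 0 ∨ A i j = 1) :
    ∀ (n : ℕ) (i j : Fin N), (A ^ n) i j ≠ 0 →
      ∃ β : Fin (n + 1) → Fin N, β ⟨0, Nat.succ_pos n⟩ = i ∧
        β ⟨n, Nat.lt_succ_self n⟩ = j ∧
        ∀ (t : ℕ) (h : t + 1 < n + 1), A (β ⟨t, by omega⟩) (β ⟨t + 1, h⟩) = 1 := by
  intro n
  induction n with
  | zero =>
    intro i j hij
    rw [pow_zero] at hij
    have hij' : i = j := by
      by_contra h
      rw [Matrix.one_apply_ne h] at hij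
      exact hij rfl
    exact ⟨fun _ => i, rfl, hij', fun t h => by omega⟩
  | succ n ih =>
    intro i j hij
    rw [pow_succ, Matrix.mul_apply] at hij
    obtain ⟨l, -, hl⟩ := Finset.exists_ne_zero_of_sum_ne_zero hij
    have h1 : (A ^ n) i l ≠ 0 := fun h => hl (by rw [h, zero_mul])
    have h2 : A l j = 1 := (hA01 l j).resolve_left fun h => hl (by rw [h, mul_zero])
    obtain ⟨β, hβ0, hβn, hβ⟩ := ih i l h1
    refine ⟨fun t => if h : (t : ℕ) < n + 1 then β ⟨t, h⟩ else j, ?_, ?_, ?_⟩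
    · simpa using hβ0
    · simp
    · intro t h
      by_cases ht : t + 1 < n + 1
      · have ht' : t < n + 1 := by omega
        simp only [dif_pos ht, dif_pos ht']
        exact hβ t ht
      · have htn : t = n := by omega
        dsimp only
        rw [dif_pos (show t < n + 1 by omega), dif_neg ht]
        rw [show (⟨t, by omega⟩ : Fin (n + 1)) = ⟨n, Nat.lt_succ_self n⟩ from Fin.ext htn,
          hβn]
        exact h2

/-- Let `A ∈ M_N({0,1})` be primitive with all entries of `A^k`
strictly positive, and suppose not all admissible words of length `k` are cycles.
Let `C_k` be the set of admissible cycles of length `k`. Then the element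
`x_k = ∑_{α ∈ C_k} S_α S_α^*` of the Cuntz–Krieger algebra `O_A` is a nonzero
projection different from `1` which is invariant under every gauge automorphism
`α_z` (`z ∈ 𝕋^N`, `α_z(Sᵢ) = zᵢ Sᵢ`) and under every automorphism induced by a
graph automorphism of `A`. -/
theorem cycle_projection_invariant {B : Type*} [NormedRing B] [StarRing B]
    [CStarRing B] [CompleteSpace B] [NormedAlgebra ℂ B] [StarModule ℂ B]
    {N : ℕ} (A : Matrix (Fin N) (Fin N) ℕ)
    (hA01 : ∀ i j, A i j = 0 ∨ A i j = 1)
    (k : ℕ) (hk : 0 < k)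
    (hprimk : ∀ i j, (A ^ k) i j ≠ 0)
    (hnotall : ∃ α : Fin k → Fin N, Adm A α ∧ ¬ Cyc A α)
    (S : Fin N → B)
    (hck1 : ∑ j, S j * star (S j) = 1)
    (hck2 : ∀ i l, star (S i) * S l =
      if i = l then ∑ j, A i j • (S j * star (S j)) else 0)
    (hnonzero : ∀ α : Fin k → Fin N, Adm A α →
      (List.ofFn fun i => S (α i)).prod *
        star ((List.ofFn fun i => S (α i)).prod) ≠ 0)
    (x : B)
    (hx : x = ∑ α ∈ Finset.univ.filter (fun α : Fin k → Fin N => Cyc A α),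
      (List.ofFn fun i => S (α i)).prod *
        star ((List.ofFn fun i => S (α i)).prod)) :
    star x = x ∧ x * x = x ∧ x ≠ 0 ∧ x ≠ 1 ∧
      (∀ z : Fin N → ℂ, (∀ i, ‖z i‖ = 1) →
        ∀ Φ : B ≃⋆ₐ[ℂ] B, (∀ i, Φ (S i) = z i • S i) → Φ x = x) ∧
      (∀ π : Equiv.Perm (Fin N), (∀ i j, A (π i) (π j) = A i j) →
        ∀ Φ : B ≃⋆ₐ[ℂ] B, (∀ i, Φ (S i) = S (π i)) → Φ x = x) := by
  -- notation
  have hW : ∀ α : Fin k → Fin N,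
      (List.ofFn fun i => S (α i)).prod = CKW S (List.ofFn α) := by
    intro α
    rw [CKW, List.map_ofFn]
    rfl
  -- admissible words give chains
  have hchain : ∀ α : Fin k → Fin N, Adm A α →
      (List.ofFn α).Chain' (fun a b => A a b = 1) := by
    intro α hadm
    refine List.isChain_iff_getElem.mpr ?_
    intro i hi
    simp only [List.length_ofFn] at hi
    simp only [List.getElem_ofFn]
    exact hadm i (by omega)
  -- orthogonality of the range projections
  have key_orth : ∀ α β : Fin k → Fin N, α ≠ β →
      ((List.ofFn fun i => S (α i)).prod * star ((List.ofFn fun i => S (α i)).prod)) *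
        ((List.ofFn fun i => S (β i)).prod * star ((List.ofFn fun i => S (β i)).prod)) = 0 := by
    intro α β hne
    rw [hW, hW]
    have h := CK_orth hck1 hck2 (List.ofFn α) (List.ofFn β) (by simp)
      (by simpa [List.ofFn_inj] using hne)
    rw [mul_assoc, ← mul_assoc (star (CKW S (List.ofFn α))), h, zero_mul, mul_zero]
  -- idempotency of the range projections
  have key_idem : ∀ α : Fin k → Fin N, Adm A α →
      ((List.ofFn fun i => S (α i)).prod * star ((List.ofFn fun i => S (α i)).prod)) *
        ((List.ofFn fun i => S (α i)).prod * star ((List.ofFn fun i => S (α i)).prod)) =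
        (List.ofFn fun i => S (α i)).prod * star ((List.ofFn fun i => S (α i)).prod) := by
    intro α hadm
    rw [hW]
    have h := CK_proj hck1 hck2 (List.ofFn α) (hchain α hadm)
    calc CKW S (List.ofFn α) * star (CKW S (List.ofFn α)) *
          (CKW S (List.ofFn α) * star (CKW S (List.ofFn α)))
        = CKW S (List.ofFn α) * star (CKW S (List.ofFn α)) * CKW S (List.ofFn α) *
            star (CKW S (List.ofFn α)) := by simp only [mul_assoc]
      _ = CKW S (List.ofFn α) * star (CKW S (List.ofFn α)) := by rw [h]
  -- existence of a cycle
  obtain ⟨α₀, hadm₀, hncyc₀⟩ := hnotall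
  set i₀ : Fin N := α₀ ⟨0, hk⟩ with hi₀
  obtain ⟨β, hβ0, hβk, hβ⟩ := exists_path A hA01 k i₀ i₀ (hprimk i₀ i₀)
  set γ : Fin k → Fin N := fun t => β ⟨t.1, by omega⟩ with hγ
  have hγcyc : Cyc A γ := by
    constructor
    · intro t ht
      exact hβ t (by omega)
    · intro h0
      have h5 := hβ (k - 1) (by omega)
      have e2 : (⟨k - 1 + 1, by omega⟩ : Fin (k + 1)) = ⟨k, Nat.lt_succ_self k⟩ :=
        Fin.ext (by simp only [Fin.val_mk]; omega)
      rw [e2, hβk, ← hβ0] at h5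
      exact h5
  have hγmem : γ ∈ Finset.univ.filter (fun α : Fin k → Fin N => Cyc A α) :=
    Finset.mem_filter.mpr ⟨Finset.mem_univ γ, hγcyc⟩
  -- the six claims
  refine ⟨?_, ?_, ?_, ?_, ?_, ?_⟩
  · -- star x = x
    rw [hx, star_sum]
    refine Finset.sum_congr rfl fun α _ => ?_
    rw [star_mul, star_star]
  · -- x * x = x
    rw [hx, Finset.sum_mul_sum]
    refine Finset.sum_congr rfl fun α hα => ?_
    rw [Finset.sum_eq_single α]
    · exact key_idem α (Finset.mem_filter.mp hα).2.1
    · intro b _ hb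
      exact key_orth α b (Ne.symm hb)
    · intro h
      exact absurd hα h
  · -- x ≠ 0
    intro hx0
    have hxγ : x * ((List.ofFn fun i => S (γ i)).prod *
        star ((List.ofFn fun i => S (γ i)).prod)) =
        (List.ofFn fun i => S (γ i)).prod * star ((List.ofFn fun i => S (γ i)).prod) := by
      rw [hx, Finset.sum_mul, Finset.sum_eq_single γ]
      · exact key_idem γ hγcyc.1
      · intro b _ hb
        exact key_orth b γ hb
      · intro h
        exact absurd hγmem h
    rw [hx0, zero_mul] at hxγ
    exact hnonzero γ hγcyc.1 hxγ.symm
  · -- x ≠ 1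
    intro hx1
    have h0 : ((List.ofFn fun i => S (α₀ i)).prod *
        star ((List.ofFn fun i => S (α₀ i)).prod)) * x = 0 := by
      rw [hx, Finset.mul_sum]
      refine Finset.sum_eq_zero fun b hb => ?_
      refine key_orth α₀ b fun h => ?_
      exact hncyc₀ (h ▸ (Finset.mem_filter.mp hb).2)
    rw [hx1, mul_one] at h0
    exact hnonzero α₀ hadm₀ h0
  · -- gauge invariance
    intro z hz Φ hΦ
    have hWΦ : ∀ α : Fin k → Fin N,
        Φ ((List.ofFn fun i => S (α i)).prod) =
          (∏ i, z (α i)) • (List.ofFn fun i => S (α i)).prod := by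
      intro α
      rw [map_list_prod, List.map_ofFn]
      have : (Φ ∘ fun i => S (α i)) = fun i => z (α i) • S (α i) := by
        funext i
        exact hΦ (α i)
      rw [this, ofFn_smul_prod]
    have hc : ∀ α : Fin k → Fin N,
        (∏ i, z (α i)) * star (∏ i, z (α i)) = 1 := by
      intro α
      have hn : ‖∏ i, z (α i)‖ = 1 := by
        rw [norm_prod]
        exact Finset.prod_eq_one fun i _ => hz (α i)
      have : star (∏ i, z (α i)) = (starRingEnd ℂ) (∏ i, z (α i)) := rfl
      rw [this, Complex.mul_conj, Complex.normSq_eq_norm_sq, hn]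
      norm_num
    rw [hx, map_sum]
    refine Finset.sum_congr rfl fun α _ => ?_
    rw [map_mul, map_star, hWΦ, star_smul, smul_mul_smul_comm, hc, one_smul]
  · -- graph automorphism invariance
    intro π hπ Φ hΦ
    have hWΦ : ∀ α : Fin k → Fin N,
        Φ ((List.ofFn fun i => S (α i)).prod) =
          (List.ofFn fun i => S (π (α i))).prod := by
      intro α
      rw [map_list_prod, List.map_ofFn]
      have : (Φ ∘ fun i => S (α i)) = fun i => S (π (α i)) := by
        funext i
        exact hΦ (α i)
      rw [this]
    have hCycπ : ∀ α : Fin k → Fin N, Cyc A (fun i => π (α i)) ↔ Cyc A α := by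
      intro α
      simp [Cyc, Adm, hπ]
    have hbij : Function.Bijective (fun (α : Fin k → Fin N) => fun i => π (α i)) :=
      (Equiv.piCongrRight fun _ : Fin k => π).bijective
    rw [hx, map_sum]
    have hterm : ∀ α : Fin k → Fin N,
        Φ ((List.ofFn fun i => S (α i)).prod * star ((List.ofFn fun i => S (α i)).prod)) =
          (List.ofFn fun i => S (π (α i))).prod *
            star ((List.ofFn fun i => S (π (α i))).prod) := by
      intro α
      rw [map_mul, map_star, hWΦ]
    calc ∑ α ∈ Finset.univ.filter (fun α : Fin k → Fin N => Cyc A α),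
          Φ ((List.ofFn fun i => S (α i)).prod * star ((List.ofFn fun i => S (α i)).prod))
        = ∑ α ∈ Finset.univ.filter (fun α : Fin k → Fin N => Cyc A α),
            (List.ofFn fun i => S (π (α i))).prod *
              star ((List.ofFn fun i => S (π (α i))).prod) :=
          Finset.sum_congr rfl fun α _ => hterm α
      _ = ∑ α ∈ Finset.univ.filter (fun α : Fin k → Fin N => Cyc A α),
            (List.ofFn fun i => S (α i)).prod * star ((List.ofFn fun i => S (α i)).prod) := by
          rw [Finset.sum_filter, Finset.sum_filter]
          refine Fintype.sum_bijective _ hbij _ _ fun α => ?_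
          by_cases h : Cyc A α
          · rw [if_pos h, if_pos ((hCycπ α).mpr h)]
          · rw [if_neg h, if_neg fun hc => h ((hCycπ α).mp hc)]
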